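/- If O is a finite order ideal of monomials in n variables and b is an element of minimal degree in the border ∂O, then O ∪ {b} is again an order ideal. -/

import Mathlib

open MvPolynomial

variable {k : Type*} [Field k] {n : ℕ}

def isOrderIdeal (O : Finset (Fin n →₀ ℕ)) : Prop :=
  ∀ t ∈ O, ∀ t' : Fin n →₀ ℕ, t' ≤ t → t' ∈ O

noncomputable def borderF (S : Finset (Fin n →₀ ℕ)) : Finset (Fin n →₀ ℕ) := by
  classical
  exact (S.biUnion fun s => (Finset.univ : Finset (Fin n)).image fun i => s + Finsupp.single i 1) \ S

noncomputable def deg (t : Fin n →₀ ℕ) : ℕ := t.sum fun _ e => e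

/-! If some `t' < b` lay outside `O`, then a minimal monomial below `t'` outside `O` would be
a border monomial (its predecessors lie in `O`, and `1 ∈ O`) of degree less than `deg b`. -/

lemma deg_eq_degree (t : Fin n →₀ ℕ) : deg t = t.degree := rfl

lemma deg_lt_deg {s t : Fin n →₀ ℕ} (h : s < t) : deg s < deg t := by
  obtain ⟨d, rfl⟩ := le_iff_exists_add.mp h.le
  have hd : d ≠ 0 := by rintro rfl; simp at h
  simp only [deg_eq_degree, map_add, lt_add_iff_pos_right, pos_iff_ne_zero, ne_eq,
    Finsupp.degree_eq_zero_iff, hd, not_false_eq_true]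

lemma mem_borderF {S : Finset (Fin n →₀ ℕ)} {b : Fin n →₀ ℕ} :
    b ∈ borderF S ↔ (∃ s ∈ S, ∃ i, s + Finsupp.single i 1 = b) ∧ b ∉ S := by
  simp [borderF]

lemma zero_mem_of_mem_borderF {O : Finset (Fin n →₀ ℕ)} (hO : isOrderIdeal O) {b : Fin n →₀ ℕ}
    (hb : b ∈ borderF O) : 0 ∈ O := by
  obtain ⟨⟨s, hs, -⟩, -⟩ := mem_borderF.mp hb
  exact hO s hs 0 zero_le

lemma exists_mem_borderF_le {O : Finset (Fin n →₀ ℕ)} (h0 : 0 ∈ O) {t : Fin n →₀ ℕ}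
    (ht : t ∉ O) : ∃ u ∈ borderF O, u ≤ t := by
  obtain ⟨u, hut, hu⟩ := exists_minimal_le_of_wellFoundedLT (· ∉ O) t ht
  refine ⟨u, mem_borderF.mpr ⟨?_, hu.prop⟩, hut⟩
  obtain ⟨i, hi⟩ : ∃ i, u i ≠ 0 := by
    by_contra! h
    exact hu.prop ((Finsupp.ext h : u = 0) ▸ h0)
  have hle : Finsupp.single i 1 ≤ u := Finsupp.single_le_iff.mpr (Nat.one_le_iff_ne_zero.mpr hi)
  refine ⟨u - Finsupp.single i 1, ?_, i, tsub_add_cancel_of_le hle⟩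
  by_contra hout
  have := hu.le_of_le hout tsub_le_self i
  simp only [Finsupp.coe_tsub, Pi.sub_apply, Finsupp.single_eq_same] at this
  omega

theorem border_min_degree_insert (O : Finset (Fin n →₀ ℕ)) (hO : isOrderIdeal O)
    (b : Fin n →₀ ℕ) (hb : b ∈ borderF O)
    (hmin : ∀ b' ∈ borderF O, deg b ≤ deg b') :
    isOrderIdeal (by classical exact insert b O) := by
  classical
  intro t ht t' ht'
  rcases Finset.mem_insert.mp ht with rfl | htO
  · rcases ht'.eq_or_lt with rfl | hlt
    · exact Finset.mem_insert_self _ _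
    refine Finset.mem_insert_of_mem (not_not.mp fun ht'O => ?_)
    obtain ⟨u, hu, hut'⟩ := exists_mem_borderF_le (zero_mem_of_mem_borderF hO hb) ht'O
    exact (hmin u hu).not_gt (deg_lt_deg (hut'.trans_lt hlt))
  · exact Finset.mem_insert_of_mem (hO t htO t' ht')
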